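/- arXiv:1311.6554 — 4 statements merged into one kernel-verified Lean document; each statement's English description precedes it below -/
import Mathlib

section
/- Every finite simple graph is an orbital network with d generators, where d is the maximal vertex degree: for every finite simple graph G on a vertex set V with maximal degree d, there exist maps T_1, …, T_d : V → V such that for all x, y ∈ V, x is adjacent to y in G if and only if x ≠ y and T_i(x) = y or T_i(y) = x for some i ∈ {1, …, d}. -/
/-- The orbital network generated by maps `T 0, …, T (d-1)` on `V`: distinct vertices
`x, y` are adjacent iff `T i x = y` or `T i y = x` for some `i`. -/
def orbitalNetwork {V : Type*} {d : ℕ} (T : Fin d → V → V) : SimpleGraph V where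
  Adj x y := x ≠ y ∧ ∃ i, T i x = y ∨ T i y = x
  symm := ⟨fun _ _ ⟨hxy, i, hi⟩ => ⟨hxy.symm, i, hi.symm⟩⟩
  loopless := ⟨fun _ ⟨hx, _⟩ => hx rfl⟩

/-!
Let `d` be the maximal degree. Each vertex `x` has at most `d` neighbours, so we may list them
as `T 0 x, …, T (d-1) x`, padding the list with `x` itself. Every edge `xy` then appears as
`T i x = y`, and conversely `T i x = y ≠ x` forces `y` to be a neighbour of `x`.
-/

open Finset

theorem Finset.exists_subset_range_subset_insert {α : Type*} (s : Finset α) (a : α) {d : ℕ}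
    (hs : #s ≤ d) : ∃ f : Fin d → α, ↑s ⊆ Set.range f ∧ Set.range f ⊆ insert a ↑s := by
  refine ⟨fun i => s.toList.getD i a, fun y hy => ?_, ?_⟩
  · obtain ⟨j, hj, rfl⟩ := List.getElem_of_mem (mem_toList.mpr hy)
    have hjd : j < d := lt_of_lt_of_le hj (s.length_toList ▸ hs)
    exact ⟨⟨j, hjd⟩, List.getD_eq_getElem _ _ hj⟩
  · rintro _ ⟨i, rfl⟩
    dsimp only
    rcases lt_or_ge (i : ℕ) s.toList.length with hi | hi
    · rw [List.getD_eq_getElem _ _ hi]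
      exact Set.mem_insert_of_mem _ (mem_toList.mp (List.getElem_mem hi))
    · rw [List.getD_eq_default _ _ hi]
      exact Set.mem_insert a _

namespace SimpleGraph

variable {V : Type*}

theorem exists_neighborSet_subset_range_subset_insert [Fintype V] (G : SimpleGraph V)
    [DecidableRel G.Adj] :
    ∃ T : Fin G.maxDegree → V → V, ∀ x,
      G.neighborSet x ⊆ Set.range (T · x) ∧ Set.range (T · x) ⊆ insert x (G.neighborSet x) := by
  have hT := fun x => (G.neighborFinset x).exists_subset_range_subset_insert x
    (G.degree_le_maxDegree x)
  choose T hT using hT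
  refine ⟨fun i x => T x i, fun x => ?_⟩
  simpa only [coe_neighborFinset] using hT x

theorem eq_orbitalNetwork_of_neighborSet_subset_range_subset_insert {d : ℕ}
    (G : SimpleGraph V) (T : Fin d → V → V)
    (hT : ∀ x, G.neighborSet x ⊆ Set.range (T · x) ∧
      Set.range (T · x) ⊆ insert x (G.neighborSet x)) :
    G = orbitalNetwork T := by
  have adj_of_eq : ∀ {x y} i, x ≠ y → T i x = y → G.Adj x y := fun {x y} i hxy hi =>
    ((hT x).2 ⟨i, hi⟩).resolve_left hxy.symm
  ext x y
  refine ⟨fun h => ?_, ?_⟩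
  · obtain ⟨i, hi⟩ := (hT x).1 h
    exact ⟨h.ne, i, Or.inl hi⟩
  · rintro ⟨hxy, i, hi | hi⟩
    · exact adj_of_eq i hxy hi
    · exact (adj_of_eq i hxy.symm hi).symm

end SimpleGraph

theorem every_graph_is_orbital_general {V : Type*} [Fintype V]
    (G : SimpleGraph V) [DecidableRel G.Adj] :
    ∃ T : Fin G.maxDegree → V → V, G = orbitalNetwork T := by
  obtain ⟨T, hT⟩ := G.exists_neighborSet_subset_range_subset_insert
  exact ⟨T, G.eq_orbitalNetwork_of_neighborSet_subset_range_subset_insert T hT⟩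

/-- Every finite simple graph is an orbital network with `d` generators, where `d` is
the maximal vertex degree. -/
theorem every_graph_is_orbital {V : Type*} [Fintype V] [DecidableEq V]
    (G : SimpleGraph V) [DecidableRel G.Adj] :
    ∃ T : Fin G.maxDegree → V → V, G = orbitalNetwork T :=
  every_graph_is_orbital_general G
end

section
/- Let n be even but not divisible by 8, and let G be the orbital network on Z_n generated by finitely many maps T_i(x) = x^2 + c_i where every c_i ∈ Z_n is even. Then the subgraph of G induced on the even residues is isomorphic (as a simple graph) to the subgraph of G induced on the odd residues. -/
namespace orbitalNetwork

variable {V W : Type*} {d : ℕ} {T : Fin d → V → V}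

theorem adj_map_iff_of_semiconj {T' : Fin d → W → W} {φ : V → W} (hφ : Function.Injective φ)
    {x y : V} (hx : ∀ i, T' i (φ x) = φ (T i x)) (hy : ∀ i, T' i (φ y) = φ (T i y)) :
    (orbitalNetwork T').Adj (φ x) (φ y) ↔ (orbitalNetwork T).Adj x y :=
  and_congr hφ.ne_iff <| exists_congr fun i => by rw [hx, hy, hφ.eq_iff, hφ.eq_iff]

def induceIsoOfSemiconj {s t : Set V} (φ : V ≃ V) (hst : ∀ x, x ∈ s ↔ φ x ∈ t)
    (hφ : ∀ x ∈ s, ∀ i, T i (φ x) = φ (T i x)) :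
    (orbitalNetwork T).induce s ≃g (orbitalNetwork T).induce t where
  toEquiv := φ.subtypeEquiv hst
  map_rel_iff' {a b} := adj_map_iff_of_semiconj φ.injective (hφ a a.2) (hφ b b.2)

end orbitalNetwork

theorem add_sq_of_isIdempotentElem {R : Type*} [CommRing R] {e : R} (he : IsIdempotentElem e)
    (he4 : 4 * e = 0) (t : R) : (2 * t + e) ^ 2 = (2 * t) ^ 2 + e := by
  linear_combination t * he4 + he.eq

theorem ZMod.exists_eq_two_mul_of_castHom_eq_zero {n : ℕ} (hn : 2 ∣ n) {x : ZMod n}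
    (hx : ZMod.castHom hn (ZMod 2) x = 0) : ∃ t : ZMod n, x = 2 * t := by
  obtain ⟨z, rfl⟩ := ZMod.intCast_surjective x
  rw [map_intCast, ZMod.intCast_zmod_eq_zero_iff_dvd] at hx
  obtain ⟨w, rfl⟩ := hx
  exact ⟨w, by push_cast; rfl⟩

/-- The witness is `u²`, which is `1` modulo `m` and `0` modulo `u`. -/
theorem ZMod.exists_odd_isIdempotentElem_of_mul_eq_four {n m j u : ℕ} (hn : 2 ∣ n)
    (hnmu : n = m * u) (hmj : m * j = 4) (hu : Odd u) :
    ∃ e : ZMod n, IsIdempotentElem e ∧ 4 * e = 0 ∧ ZMod.castHom hn (ZMod 2) e = 1 := by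
  obtain ⟨k, rfl⟩ := hu
  have hmu : (m : ZMod n) * (2 * k + 1 : ℕ) = 0 := by
    rw [← Nat.cast_mul, ← hnmu, ZMod.natCast_self]
  have hmj' : (m : ZMod n) * j = 4 := by rw [← Nat.cast_mul, hmj, Nat.cast_ofNat]
  push_cast at hmu
  refine ⟨((2 * k + 1 : ℕ) : ZMod n) ^ 2, ?_, ?_, ?_⟩
  · show _ * _ = _
    push_cast
    linear_combination (2 * k + 1) * j * (k ^ 2 + k) * hmu - (2 * k + 1) ^ 2 * (k ^ 2 + k) * hmj'
  · push_cast
    linear_combination j * (2 * k + 1) * hmu - (2 * k + 1) ^ 2 * hmj'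
  · rw [map_pow, map_natCast]
    push_cast
    rw [show (2 : ZMod 2) = 0 from rfl]
    ring

theorem ZMod.exists_odd_isIdempotentElem_four_mul_eq_zero {n : ℕ} (hn : 2 ∣ n) (h8 : ¬ 8 ∣ n) :
    ∃ e : ZMod n, IsIdempotentElem e ∧ 4 * e = 0 ∧ ZMod.castHom hn (ZMod 2) e = 1 := by
  by_cases h4 : 4 ∣ n
  · exact exists_odd_isIdempotentElem_of_mul_eq_four hn (m := 4) (j := 1) (u := n / 4)
      (by omega) rfl (Nat.odd_iff.mpr (by omega))
  · exact exists_odd_isIdempotentElem_of_mul_eq_four hn (m := 2) (j := 2) (u := n / 2)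
      (by omega) rfl (Nat.odd_iff.mpr (by omega))

theorem orbital_quadratic_even_components_isomorphic_general {n : ℕ} {d : ℕ} (hn : 2 ∣ n)
    (h8 : ¬ (8 ∣ n)) (c : Fin d → ZMod n) :
    Nonempty
      (((orbitalNetwork (fun i (x : ZMod n) => x ^ 2 + c i)).induce
          {x : ZMod n | ZMod.castHom hn (ZMod 2) x = 0}) ≃g
       ((orbitalNetwork (fun i (x : ZMod n) => x ^ 2 + c i)).induce
          {x : ZMod n | ZMod.castHom hn (ZMod 2) x = 1})) := by
  obtain ⟨e, he, he4, he_odd⟩ := ZMod.exists_odd_isIdempotentElem_four_mul_eq_zero hn h8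
  refine ⟨orbitalNetwork.induceIsoOfSemiconj (Equiv.addRight e) (fun x => ?_) ?_⟩
  · rw [Set.mem_ofPred_eq, Set.mem_ofPred_eq, Equiv.coe_addRight, map_add, he_odd]
    exact add_eq_right.symm
  · rintro x hx i
    obtain ⟨t, rfl⟩ := ZMod.exists_eq_two_mul_of_castHom_eq_zero hn hx
    simp only [Equiv.coe_addRight, add_sq_of_isIdempotentElem he he4]
    ring

/-- For `n` even but not divisible by `8`, and quadratic maps `T i x = x² + cᵢ` with
all `cᵢ` even, the subgraph of the orbital network on `ℤ/nℤ` induced on the even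
residues is isomorphic to the subgraph induced on the odd residues. -/
theorem orbital_quadratic_even_components_isomorphic {n : ℕ} {d : ℕ} (hn : 2 ∣ n)
    (h8 : ¬ (8 ∣ n)) (c : Fin d → ZMod n)
    (hc : ∀ i, ZMod.castHom hn (ZMod 2) (c i) = 0) :
    Nonempty
      (((orbitalNetwork (fun i (x : ZMod n) => x ^ 2 + c i)).induce
          {x : ZMod n | ZMod.castHom hn (ZMod 2) x = 0}) ≃g
       ((orbitalNetwork (fun i (x : ZMod n) => x ^ 2 + c i)).induce
          {x : ZMod n | ZMod.castHom hn (ZMod 2) x = 1})) :=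
  orbital_quadratic_even_components_isomorphic_general hn h8 c
end

section
/- Let n be even and let G be the orbital network on Z_n generated by finitely many maps T_i(x) = x^2 + c_i where every c_i ∈ Z_n is odd. Then G contains no triangles, i.e. G is K_3-free (it has no clique on 3 vertices). -/
/-!
Reduction modulo 2 turns each map `x ↦ x² + cᵢ` into `u ↦ u + 1`, because `u² = u` in `ZMod 2`.
Hence parity changes along every edge of the network, i.e. reduction modulo 2 is a proper
2-colouring, and a 2-colourable graph has no triangle.
-/

section OrbitalNetwork

variable {V α : Type*} {d : ℕ} {T : Fin d → V → V}

def orbitalNetwork.coloringOfMapNe (f : V → α) (hf : ∀ i x, f (T i x) ≠ f x) :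
    (orbitalNetwork T).Coloring α :=
  SimpleGraph.Coloring.mk f fun {x y} ⟨_, i, hi⟩ => by
    rcases hi with rfl | rfl
    · exact (hf i x).symm
    · exact hf i y

theorem orbitalNetwork_colorable_of_map_ne [Fintype α] (f : V → α)
    (hf : ∀ i x, f (T i x) ≠ f x) : (orbitalNetwork T).Colorable (Fintype.card α) :=
  (orbitalNetwork.coloringOfMapNe f hf).colorable

end OrbitalNetwork

theorem ZMod.castHom_two_sq_add_of_odd {n : ℕ} (hn : 2 ∣ n) {c : ZMod n}
    (hc : ZMod.castHom hn (ZMod 2) c = 1) (x : ZMod n) :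
    ZMod.castHom hn (ZMod 2) (x ^ 2 + c) = ZMod.castHom hn (ZMod 2) x + 1 := by
  rw [map_add, map_pow, hc, ZMod.pow_card]

/-- For `n` even and quadratic maps `T i x = x² + cᵢ` with all `cᵢ` odd, the orbital
network on `ℤ/nℤ` contains no triangles: it is `K₃`-free. -/
theorem orbital_quadratic_odd_triangle_free {n : ℕ} {d : ℕ} (hn : 2 ∣ n)
    (c : Fin d → ZMod n) (hc : ∀ i, ZMod.castHom hn (ZMod 2) (c i) = 1) :
    (orbitalNetwork (fun i (x : ZMod n) => x ^ 2 + c i)).CliqueFree 3 := by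
  have parity_flips : ∀ i (x : ZMod n),
      ZMod.castHom hn (ZMod 2) (x ^ 2 + c i) ≠ ZMod.castHom hn (ZMod 2) x := fun i x => by
    rw [ZMod.castHom_two_sq_add_of_odd hn (hc i)]
    exact add_ne_left.mpr one_ne_zero
  exact (orbitalNetwork_colorable_of_map_ne _ parity_flips).cliqueFree (by simp)
end

section
/- The Euler characteristic of the orbital network generated by a single map is nonnegative: if f is a map on a finite set R and G is the orbital network generated by f, then c_0 − c_1 + c_2 ≥ 0, where c_0 = |R| is the number of vertices of G, c_1 is the number of edges of G, and c_2 is the number of triangles of G. (In particular the number of edges of G is at most the number of vertices.) -/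
/-- The orbital network generated by a single map `f` on `R`: distinct vertices
`x, y` are adjacent iff `f x = y` or `f y = x`. -/
def orbitalNetwork₁ {R : Type*} (f : R → R) : SimpleGraph R where
  Adj x y := x ≠ y ∧ (f x = y ∨ f y = x)
  symm := ⟨fun _ _ ⟨hxy, hi⟩ => ⟨hxy.symm, hi.symm⟩⟩
  loopless := ⟨fun _ ⟨hx, _⟩ => hx rfl⟩

/-! Every edge of the orbital network is of the form `{x, f x}`, so `x ↦ {x, f x}` maps the
vertices onto a superset of the edges and `c₁ ≤ c₀`; since `c₂ ≥ 0`, also `c₀ - c₁ + c₂ ≥ 0`. -/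

theorem orbitalNetwork₁_edgeSet_subset_range {R : Type*} (f : R → R) :
    (orbitalNetwork₁ f).edgeSet ⊆ Set.range fun x => s(x, f x) := by
  intro e he
  induction e using Sym2.ind with
  | h x y =>
    rw [SimpleGraph.mem_edgeSet] at he
    obtain ⟨-, rfl | rfl⟩ := he
    · exact ⟨x, rfl⟩
    · exact ⟨y, Sym2.eq_swap⟩

theorem orbitalNetwork₁_edgeSet_ncard_le {R : Type*} [Finite R] (f : R → R) :
    (orbitalNetwork₁ f).edgeSet.ncard ≤ Nat.card R :=
  calc (orbitalNetwork₁ f).edgeSet.ncard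
      ≤ (Set.range fun x => s(x, f x)).ncard :=
        Set.ncard_le_ncard (orbitalNetwork₁_edgeSet_subset_range f) (Set.finite_range _)
    _ ≤ Nat.card R := by
        rw [← Set.image_univ, ← Set.ncard_univ]
        exact Set.ncard_image_le Set.finite_univ

/-- The Euler characteristic `c₀ - c₁ + c₂` of the orbital network generated by a
single map on a finite set is nonnegative, where `c₀` is the number of vertices,
`c₁` the number of edges and `c₂` the number of triangles; in particular the number
of edges is at most the number of vertices. -/
theorem orbital_single_map_euler_nonneg {R : Type*} [Fintype R] (f : R → R) :
    (0 : ℤ) ≤ (Fintype.card R : ℤ) - ((orbitalNetwork₁ f).edgeSet.ncard : ℤ) +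
        (({t : Finset R | (orbitalNetwork₁ f).IsNClique 3 t}).ncard : ℤ) ∧
    (orbitalNetwork₁ f).edgeSet.ncard ≤ Fintype.card R := by
  have hedges := orbitalNetwork₁_edgeSet_ncard_le f
  rw [Nat.card_eq_fintype_card] at hedges
  exact ⟨by omega, hedges⟩
end
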